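/- arXiv:1610.08026 — 2 statements merged into one kernel-verified Lean document; each statement's English description precedes it below -/
import Mathlib

section
/- Under the interference-alignment hypotheses, let X_1, …, X_p (p ≥ 1) be pairwise disjoint nonempty subsets of {1,…,k} such that Σ_{ν∈X_i} rowSpace(S_ν) = 𝔽^l for every i ∈ {2,…,p}. Then the r^p matrices Δ_{u_1 u_2 ⋯ u_p} = Γ_{1,u_1} · Γ_{2,u_2} ⋯ Γ_{p,u_p}, indexed by all tuples (u_1,…,u_p) ∈ {1,…,r}^p, form a linearly independent family in the 𝔽-vector space of l × l matrices over 𝔽; in particular r^p ≤ l². -/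
/-!
Induct on `p`, peeling off the last group `X`. Multiplying a vanishing combination
`∑ a_u Δ_u = 0` on the left by `S ν`, `ν ∈ X`, every factor coming from an earlier group maps the
row space of `S ν` into itself (alignment, and `ν` lies in no earlier group), so the relation
becomes `∑_w A_w S_ν Γ_{X,w} = 0`. Modulo the row space of `S ν`, `S_ν Γ_{X,w}` is
`S_ν C_{w,ν}`, and the rows of the `S_ν C_{w,ν}` together form a basis of `𝔽^l`; this triangular
shape forces every `A_w` to vanish. Since the row spaces of the `S ν`, `ν ∈ X`, span `𝔽^l`, the
combinations of the shorter products attached to each `w` vanish and induction applies. For the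
first group no spanning is needed: there the coefficients are scalars and `S ν ≠ 0`.
-/

open Submodule

namespace Matrix

variable {𝔽 : Type*} [Field 𝔽] {m n q : Type*}

theorem eq_zero_of_sum_mul_eq_zero [Fintype m] {ι : Type*} [Fintype ι] {T : ι → Matrix m n 𝔽}
    (hT : LinearIndependent 𝔽 fun x : ι × m => T x.1 x.2) {G : ι → Matrix q m 𝔽}
    (h : ∑ i, G i * T i = 0) (i : ι) : G i = 0 := by
  ext t s
  have hrow : ∑ x : ι × m, G x.1 t x.2 • T x.1 x.2 = 0 := by
    ext j
    simpa [Fintype.sum_prod_type, Finset.sum_apply, Matrix.sum_apply, Matrix.mul_apply] using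
      congrFun (congrFun h t) j
  exact Fintype.linearIndependent_iff.mp hT _ hrow (i, s)

theorem eq_zero_of_forall_mul_eq_zero [Fintype n] {κ : Type*} {S : κ → Matrix m n 𝔽}
    {X : Finset κ} (hX : ⨆ ν ∈ X, span 𝔽 (Set.range (S ν)) = ⊤) {D : Matrix n q 𝔽}
    (h : ∀ ν ∈ X, S ν * D = 0) : D = 0 := by
  have hker : ⊤ ≤ LinearMap.ker D.vecMulLinear :=
    hX ▸ iSup₂_le fun ν hν => span_le.mpr <| Set.range_subset_iff.mpr fun t =>
      congrFun (h ν hν) t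
  exact ext_iff_vecMul.mpr fun v => by simpa using hker (mem_top (x := v))

theorem linearIndependent_rows_of_iSup_span_eq_top [Fintype m] [Fintype n] {ι : Type*}
    [Fintype ι] {T : ι → Matrix m n 𝔽} (hcard : Fintype.card ι * Fintype.card m = Fintype.card n)
    (h : ⨆ u, span 𝔽 (Set.range (T u)) = ⊤) :
    LinearIndependent 𝔽 fun x : ι × m => T x.1 x.2 :=
  linearIndependent_of_top_le_span_of_card_eq_finrank
    (h ▸ iSup_le fun u => span_mono <| Set.range_subset_iff.mpr fun t => ⟨(u, t), rfl⟩)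
    (by simpa using hcard)

variable [Fintype m] [DecidableEq m] [Fintype n] [DecidableEq n]

/-- Right multiplication by a member maps the row space of `S` into itself. -/
def rowSpaceStabilizer (S : Matrix m n 𝔽) : Subalgebra 𝔽 (Matrix n n 𝔽) where
  carrier := {M | ∃ A : Matrix m m 𝔽, S * M = A * S}
  mul_mem' := by
    rintro M N ⟨A, hA⟩ ⟨B, hB⟩
    exact ⟨A * B, by rw [← Matrix.mul_assoc, hA, Matrix.mul_assoc, hB, Matrix.mul_assoc]⟩
  add_mem' := by
    rintro M N ⟨A, hA⟩ ⟨B, hB⟩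
    exact ⟨A + B, by rw [Matrix.mul_add, Matrix.add_mul, hA, hB]⟩
  algebraMap_mem' c := ⟨algebraMap 𝔽 _ c, by simp [Algebra.algebraMap_eq_smul_one]⟩

theorem mem_rowSpaceStabilizer_of_span_le {S : Matrix m n 𝔽} {M : Matrix n n 𝔽}
    (h : span 𝔽 (Set.range (S * M)) ≤ span 𝔽 (Set.range S)) : M ∈ S.rowSpaceStabilizer := by
  choose A hA using fun t => (mem_span_range_iff_exists_fun 𝔽).mp (h (subset_span ⟨t, rfl⟩))
  exact ⟨Matrix.of A, by ext t j; rw [← hA t]; simp [Matrix.mul_apply, Finset.sum_apply]⟩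

end Matrix

section Alignment

open Matrix

variable {𝔽 : Type*} [Field 𝔽] {m n κ : Type*} [Fintype m] [DecidableEq m] [Fintype n]
  [DecidableEq n] {r : ℕ}

/-- The paper's `Γ_{i,u}` for `X = X_i`; the index `0 : Fin r` stands for `u = 1`. -/
def blockEncoding (C : Fin r → κ → Matrix n n 𝔽) (X : Finset κ) (u : Fin r) : Matrix n n 𝔽 :=
  if (u : ℕ) = 0 then 1 else ∑ j ∈ X, C u j

/-- Hypotheses (i) and (ii), with (ii) in the form: the rows of the `S i * C u i`, over all `u`,
are linearly independent. -/
structure IsInterferenceAligned (S : κ → Matrix m n 𝔽) (C : Fin r → κ → Matrix n n 𝔽) :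
    Prop where
  eq_one : ∀ u : Fin r, (u : ℕ) = 0 → ∀ j, C u j = 1
  mem_rowSpaceStabilizer : ∀ i j, j ≠ i → ∀ u, C u j ∈ (S i).rowSpaceStabilizer
  linearIndependent_rows : ∀ i, LinearIndependent 𝔽 fun x : Fin r × m => (S i * C x.1 i) x.2

namespace IsInterferenceAligned

variable {S : κ → Matrix m n 𝔽} {C : Fin r → κ → Matrix n n 𝔽}

theorem blockEncoding_mem (hSC : IsInterferenceAligned S C) {ν : κ} {X : Finset κ}
    (hν : ν ∉ X) (u : Fin r) : blockEncoding C X u ∈ (S ν).rowSpaceStabilizer := by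
  unfold blockEncoding
  split_ifs
  · exact Subalgebra.one_mem _
  · exact Subalgebra.sum_mem _ fun j hj =>
      hSC.mem_rowSpaceStabilizer ν j (ne_of_mem_of_not_mem hj hν) u

theorem prod_blockEncoding_mem {p : ℕ} (hSC : IsInterferenceAligned S C) {ν : κ}
    {X : Fin p → Finset κ} (hν : ∀ i, ν ∉ X i) (u : Fin p → Fin r) :
    (List.ofFn fun i => blockEncoding C (X i) (u i)).prod ∈ (S ν).rowSpaceStabilizer :=
  Subalgebra.list_prod_mem _ fun _ hM => by
    obtain ⟨i, rfl⟩ := List.mem_ofFn.mp hM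
    exact hSC.blockEncoding_mem (hν i) (u i)

variable [DecidableEq κ]

theorem exists_mul_blockEncoding_eq (hSC : IsInterferenceAligned S C) {ν : κ} {X : Finset κ}
    (hν : ν ∈ X) (u : Fin r) : ∃ B : Matrix m m 𝔽,
      S ν * blockEncoding C X u = S ν * C u ν + B * S ν ∧ ((u : ℕ) = 0 → B = 0) := by
  unfold blockEncoding
  split_ifs with hu
  · exact ⟨0, by rw [hSC.eq_one u hu, Matrix.zero_mul, add_zero], fun _ => rfl⟩
  · obtain ⟨B, hB⟩ := hSC.blockEncoding_mem (Finset.notMem_erase ν X) u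
    refine ⟨B, ?_, fun h => absurd h hu⟩
    rw [← Finset.add_sum_erase X _ hν, Matrix.mul_add, ← hB]
    simp [blockEncoding, hu]

theorem eq_zero_of_sum_mul_mul_blockEncoding_eq_zero {q : Type*}
    (hSC : IsInterferenceAligned S C) {ν : κ} {X : Finset κ} (hν : ν ∈ X)
    {G : Fin r → Matrix q m 𝔽} (h : ∑ u, G u * (S ν * blockEncoding C X u) = 0) (u : Fin r) :
    G u = 0 := by
  set u₀ : Fin r := ⟨0, u.pos⟩
  choose B hB hB₀ using fun u => hSC.exists_mul_blockEncoding_eq hν u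
  set E := ∑ u, G u * B u
  have hT₀ : S ν * C u₀ ν = S ν := by rw [hSC.eq_one u₀ rfl, Matrix.mul_one]
  -- The correction `E * S ν` is absorbed into the coefficient of `S ν * C u₀ ν = S ν`.
  set G' : Fin r → Matrix q m 𝔽 := G + Pi.single u₀ E
  have hsum : ∑ u, G' u * (S ν * C u ν) = 0 := by
    calc ∑ u, G' u * (S ν * C u ν)
        = ∑ u, G u * (S ν * C u ν) +
            ∑ u, (Pi.single u₀ E : Fin r → Matrix q m 𝔽) u * (S ν * C u ν) := by
          simp only [G', Pi.add_apply, Matrix.add_mul, Finset.sum_add_distrib]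
      _ = ∑ u, G u * (S ν * C u ν) + E * S ν := by
          congr 1
          rw [Fintype.sum_eq_single u₀ fun u hu => by simp [hu], Pi.single_eq_same, hT₀]
      _ = ∑ u, G u * (S ν * blockEncoding C X u) := by
          simp [hB, Matrix.mul_add, Finset.sum_add_distrib, E, Matrix.sum_mul, Matrix.mul_assoc]
      _ = 0 := h
  have hG := Matrix.eq_zero_of_sum_mul_eq_zero (hSC.linearIndependent_rows ν) hsum
  have hG' : ∀ u, u ≠ u₀ → G u = 0 := fun u hu => by simpa [G', hu] using hG u
  have hE : E = 0 := by
    refine Finset.sum_eq_zero fun u _ => ?_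
    by_cases hu : u = u₀
    · rw [hB₀ u (by simp [hu, u₀]), Matrix.mul_zero]
    · rw [hG' u hu, Matrix.zero_mul]
  by_cases hu : u = u₀
  · simpa [G', hu, hE] using hG u₀
  · exact hG' u hu

theorem mul_eq_zero_of_sum_mul_blockEncoding_eq_zero (hSC : IsInterferenceAligned S C)
    {ν : κ} {X : Finset κ} (hν : ν ∈ X) {M : Fin r → Matrix n n 𝔽}
    (hM : ∀ u, M u ∈ (S ν).rowSpaceStabilizer) (h : ∑ u, M u * blockEncoding C X u = 0)
    (u : Fin r) : S ν * M u = 0 := by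
  choose A hA using hM
  have hsum : ∑ u, A u * (S ν * blockEncoding C X u) = 0 := by
    simp_rw [← Matrix.mul_assoc, ← hA, Matrix.mul_assoc, ← Matrix.mul_sum, h, Matrix.mul_zero]
  rw [hA, hSC.eq_zero_of_sum_mul_mul_blockEncoding_eq_zero hν hsum, Matrix.zero_mul]

theorem linearIndependent_blockEncoding [Nonempty m] (hSC : IsInterferenceAligned S C)
    {X : Finset κ} (hX : X.Nonempty) : LinearIndependent 𝔽 (blockEncoding C X) := by
  obtain ⟨ν, hν⟩ := hX
  refine Fintype.linearIndependent_iff.mpr fun a ha u => ?_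
  have hS : S ν ≠ 0 := by
    have hrow := (hSC.linearIndependent_rows ν).ne_zero (⟨0, u.pos⟩, Classical.arbitrary m)
    rw [hSC.eq_one _ rfl, Matrix.mul_one] at hrow
    exact fun h0 => hrow (by rw [h0]; rfl)
  have hM := hSC.mul_eq_zero_of_sum_mul_blockEncoding_eq_zero hν
    (M := fun u => a u • 1) (fun u => Subalgebra.smul_mem _ (Subalgebra.one_mem _) _)
    (by simpa [Matrix.smul_mul] using ha) u
  simpa [hS] using hM

theorem linearIndependent_mul_blockEncoding (hSC : IsInterferenceAligned S C)
    {ι : Type*} [Fintype ι] {D : ι → Matrix n n 𝔽} (hD : LinearIndependent 𝔽 D)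
    {X : Finset κ} (hX : ⨆ ν ∈ X, span 𝔽 (Set.range (S ν)) = ⊤)
    (hDX : ∀ ν ∈ X, ∀ i, D i ∈ (S ν).rowSpaceStabilizer) :
    LinearIndependent 𝔽 fun x : Fin r × ι => D x.2 * blockEncoding C X x.1 := by
  refine Fintype.linearIndependent_iff.mpr fun a ha ⟨u, i⟩ => ?_
  have hsum : ∑ u, (∑ i, a (u, i) • D i) * blockEncoding C X u = 0 := by
    rw [← ha, Fintype.sum_prod_type]
    simp only [Matrix.sum_mul, Matrix.smul_mul]
  have hM : ∀ u, ∑ i, a (u, i) • D i = 0 := fun u =>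
    Matrix.eq_zero_of_forall_mul_eq_zero hX fun ν hν =>
      hSC.mul_eq_zero_of_sum_mul_blockEncoding_eq_zero hν
        (fun u => Subalgebra.sum_mem _ fun i _ => Subalgebra.smul_mem _ (hDX ν hν i) _) hsum u
  exact Fintype.linearIndependent_iff.mp hD _ (hM u) i

theorem linearIndependent_prod_blockEncoding [Nonempty m] (hSC : IsInterferenceAligned S C)
    {p : ℕ} {X : Fin (p + 1) → Finset κ} (hX₀ : (X 0).Nonempty)
    (hdisj : ∀ i j, i ≠ j → Disjoint (X i) (X j))
    (hspan : ∀ i : Fin (p + 1), (i : ℕ) ≠ 0 →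
      ⨆ ν ∈ X i, span 𝔽 (Set.range (S ν)) = ⊤) :
    LinearIndependent 𝔽 fun u : Fin (p + 1) → Fin r =>
      (List.ofFn fun i => blockEncoding C (X i) (u i)).prod := by
  induction p with
  | zero =>
    simpa [← Function.comp_def] using (hSC.linearIndependent_blockEncoding hX₀).comp _
      (Equiv.funUnique (Fin 1) (Fin r)).injective
  | succ p ih =>
    have hinit := ih (X := fun i => X i.castSucc) hX₀
      (fun i j hij => hdisj _ _ (Fin.castSucc_injective _ |>.ne hij))
      (fun i hi => hspan i.castSucc hi)
    rw [← linearIndependent_equiv (Fin.snocEquiv fun _ => Fin r)]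
    convert hSC.linearIndependent_mul_blockEncoding hinit (hspan (Fin.last _) (by simp))
      fun ν hν v => hSC.prod_blockEncoding_mem (fun i hi =>
        Finset.disjoint_left.mp (hdisj _ _ (Fin.castSucc_lt_last i).ne) hi hν) v using 1
    ext ⟨u, v⟩ : 1
    rw [Function.comp_apply, List.ofFn_succ', List.prod_concat]
    simp

end IsInterferenceAligned

end Alignment

theorem stmt_8 {𝔽 : Type*} [Field 𝔽] (k r l : ℕ)
    (hr : 2 ≤ r) (hl : 0 < l) (hrl : r ∣ l)
    (S : Fin k → Matrix (Fin (l / r)) (Fin l) 𝔽)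
    (C : Fin r → Fin k → Matrix (Fin l) (Fin l) 𝔽)
    (hC1 : ∀ j, C ⟨0, by omega⟩ j = 1)
    (hIA1 : ∀ (i j : Fin k), j ≠ i → ∀ u : Fin r,
      Submodule.span 𝔽 (Set.range (S i * C u j)) = Submodule.span 𝔽 (Set.range (S i)))
    (hIA3 : ∀ i : Fin k,
      (⨆ u : Fin r, Submodule.span 𝔽 (Set.range (S i * C u i))) = ⊤)
    (p : ℕ) (hp : 1 ≤ p) (X : Fin p → Finset (Fin k))
    (hXne : ∀ i, (X i).Nonempty)
    (hXdisj : ∀ i j, i ≠ j → Disjoint (X i) (X j))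
    (hXspan : ∀ i : Fin p, (i : ℕ) ≠ 0 →
      (⨆ ν ∈ X i, Submodule.span 𝔽 (Set.range (S ν))) = ⊤)
    (Γ : Fin p → Fin r → Matrix (Fin l) (Fin l) 𝔽)
    (hΓ : ∀ i u, Γ i u =
      if (u : ℕ) = 0 then (1 : Matrix (Fin l) (Fin l) 𝔽) else ∑ j ∈ X i, C u j) :
    LinearIndependent 𝔽
      (fun u : Fin p → Fin r => (List.ofFn (fun i : Fin p => Γ i (u i))).prod) ∧
    r ^ p ≤ l ^ 2 := by
  obtain ⟨p, rfl⟩ := Nat.exists_eq_add_of_le' hp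
  obtain rfl : Γ = fun i => blockEncoding C (X i) := funext fun i => funext (hΓ i)
  have hSC : IsInterferenceAligned S C :=
    ⟨fun u hu j => (congrArg (C · j) (Fin.ext hu)).trans (hC1 j),
      fun i j hji u => Matrix.mem_rowSpaceStabilizer_of_span_le (hIA1 i j hji u).le,
      fun i => Matrix.linearIndependent_rows_of_iSup_span_eq_top
        (by simp [Nat.mul_div_cancel' hrl]) (hIA3 i)⟩
  have : Nonempty (Fin (l / r)) := ⟨⟨0, Nat.div_pos (Nat.le_of_dvd hl hrl) (by omega)⟩⟩
  have hLI := hSC.linearIndependent_prod_blockEncoding (hXne 0) hXdisj hXspan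
  refine ⟨hLI, ?_⟩
  calc r ^ (p + 1) = Fintype.card (Fin (p + 1) → Fin r) := by simp
    _ ≤ Module.finrank 𝔽 (Matrix (Fin l) (Fin l) 𝔽) := hLI.fintype_card_le_finrank
    _ = l ^ 2 := by simp [Module.finrank_matrix, sq]
end

section
/- Under the interference-alignment hypotheses, set t = ⌈r²/l⌉ and suppose t = r and r < k. Then every subset F ⊆ {1,…,k} with |F| = r satisfies Σ_{i∈F} rowSpace(S_i) = 𝔽^l, while for every m < r, every subset F ⊆ {1,…,k} with |F| = m satisfies dim(Σ_{i∈F} rowSpace(S_i)) = m·(l/r) < l. (That is, the standard-partition size λ equals r.) -/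
/-!
The condition `⌈r² / l⌉ = r` forces `l = r`, so every repair subspace `rowSpace(S i)` is (at
most) a line. Let `W` be the sum of the lines of a set `G` of nodes not containing `a`. By
alignment (i), `W` is invariant under every `C u a`; if it contained the line of `a` it would
contain all the images `rowSpace(S a * C u a)`, which span `𝔽^l` by (ii). Hence, as long as
`W ≠ 𝔽^l`, adding one more node raises the dimension by exactly one, and induction on `|F|`
gives `dim Σ_{i∈F} rowSpace(S i) = |F|` for `|F| ≤ r`.
-/

open Submodule Module

theorem eq_of_ceilDiv_sq_eq {r l : ℕ} (hr : 2 ≤ r) (hl : 0 < l) (hrl : r ∣ l)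
    (h : r ^ 2 ⌈/⌉ l = r) : l = r := by
  obtain ⟨c, rfl⟩ := hrl
  have hc : 0 < c := Nat.pos_of_mul_pos_left hl
  have hlt : ¬ r ^ 2 ≤ r * c * (r - 1) := by
    rw [← ceilDiv_le_iff_le_mul hl, h]
    omega
  -- `⌈r / c⌉ = r` with `r ≥ 2` forces `c = 1`
  obtain rfl : c = 1 := by
    by_contra hc1
    obtain ⟨s, rfl⟩ : ∃ s, r = s + 2 := ⟨r - 2, by omega⟩
    have hc2 : 2 ≤ c := by omega
    apply hlt
    rw [show s + 2 - 1 = s + 1 by omega]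
    nlinarith [Nat.mul_le_mul_left ((s + 2) * (s + 1)) hc2]
  exact mul_one r

theorem Matrix.span_range_mul {K m n o : Type*} [Field K] [Fintype n]
    (A : Matrix m n K) (B : Matrix n o K) :
    span K (Set.range (A * B)) = (span K (Set.range A)).map (Matrix.vecMulLinear B) := by
  rw [map_span]
  exact congrArg _ (Set.range_comp (Matrix.vecMulLinear B) A)

section InterferenceAlignment

variable {K M ι κ : Type*} [Field K] [AddCommGroup M] [Module K M]
  {V : ι → Submodule K M} {T : ι → κ → M →ₗ[K] M}

theorem iSup_eq_top_of_le_iSup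
    (hinv : ∀ a j, j ≠ a → ∀ u, (V j).map (T a u) ≤ V j)
    (hspan : ∀ a, ⨆ u, (V a).map (T a u) = ⊤)
    {G : Finset ι} {a : ι} (ha : a ∉ G) (hle : V a ≤ ⨆ j ∈ G, V j) :
    ⨆ j ∈ G, V j = ⊤ := by
  have hW : ∀ u, (⨆ j ∈ G, V j).map (T a u) ≤ ⨆ j ∈ G, V j := fun u => by
    simp only [Submodule.map_iSup]
    exact iSup₂_mono fun j hj => hinv a j (ne_of_mem_of_not_mem hj ha) u
  rw [eq_top_iff, ← hspan a]
  exact iSup_le fun u => (map_mono hle).trans (hW u)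

theorem finrank_iSup_eq_card [DecidableEq ι] [FiniteDimensional K M]
    (hinv : ∀ a j, j ≠ a → ∀ u, (V j).map (T a u) ≤ V j)
    (hspan : ∀ a, ⨆ u, (V a).map (T a u) = ⊤)
    (hV : ∀ i, finrank K (V i) ≤ 1) (F : Finset ι) (hF : F.card ≤ finrank K M) :
    finrank K ↥(⨆ i ∈ F, V i) = F.card := by
  induction F using Finset.induction_on with
  | empty => simp
  | insert a G ha ih =>
    rw [Finset.card_insert_of_notMem ha] at hF ⊢
    rw [Finset.iSup_insert]
    set W := ⨆ j ∈ G, V j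
    have hW : finrank K W = G.card := ih (by omega)
    have hnle : ¬ V a ≤ W := fun hle => by
      have htop : W = ⊤ := iSup_eq_top_of_le_iSup hinv hspan ha hle
      rw [htop, finrank_top] at hW
      omega
    -- a line not contained in `W` meets it trivially
    have hinf : finrank K ↥(V a ⊓ W) = 0 := by
      by_contra h0
      exact hnle (inf_eq_left.mp (eq_of_le_of_finrank_le inf_le_left (by
        have := hV a; omega)))
    have hVa : finrank K (V a) = 1 :=
      le_antisymm (hV a) (Nat.one_le_iff_ne_zero.mpr fun h =>
        hnle (by rw [finrank_eq_zero.mp h]; exact bot_le))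
    have := finrank_sup_add_finrank_inf_eq (V a) W
    omega

end InterferenceAlignment

theorem stmt_13 {𝔽 : Type*} [Field 𝔽] (k r l : ℕ)
    (hr : 2 ≤ r) (hl : 0 < l) (hrl : r ∣ l)
    (S : Fin k → Matrix (Fin (l / r)) (Fin l) 𝔽)
    (C : Fin r → Fin k → Matrix (Fin l) (Fin l) 𝔽)
    (hIA1 : ∀ (i j : Fin k), j ≠ i → ∀ u : Fin r,
      Submodule.span 𝔽 (Set.range (S i * C u j)) = Submodule.span 𝔽 (Set.range (S i)))
    (hIA3 : ∀ i : Fin k,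
      (⨆ u : Fin r, Submodule.span 𝔽 (Set.range (S i * C u i))) = ⊤)
    (t : ℕ) (ht : t = r ^ 2 ⌈/⌉ l) (htr : t = r) :
    (∀ F : Finset (Fin k), F.card = r →
      (⨆ i ∈ F, Submodule.span 𝔽 (Set.range (S i))) = ⊤) ∧
    (∀ m : ℕ, m < r → ∀ F : Finset (Fin k), F.card = m →
      Module.finrank 𝔽 ↥(⨆ i ∈ F, Submodule.span 𝔽 (Set.range (S i))) = m * (l / r) ∧
      m * (l / r) < l) := by
  obtain rfl : l = r := eq_of_ceilDiv_sq_eq hr hl hrl (ht ▸ htr)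
  have hβ : l / l = 1 := Nat.div_self hl
  simp only [Matrix.span_range_mul] at hIA1 hIA3
  have hdim := finrank_iSup_eq_card (T := fun a u => Matrix.vecMulLinear (C u a))
    (fun a j hj u => (hIA1 j a hj.symm u).le) hIA3 (fun i => by
      simpa [hβ, Set.finrank] using finrank_range_le_card (R := 𝔽) (S i))
  refine ⟨fun F hF => eq_top_of_finrank_eq ?_, fun m hm F hF => ⟨?_, by rw [hβ]; omega⟩⟩
  · rw [hdim F (by simp [hF]), hF, finrank_fin_fun]
  · rw [hdim F (by simp [hF]; omega), hF, hβ, mul_one]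
end
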